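/- Let 𝔼 be a Markovian kernel operator on B_b(𝒳) with kernel k such that k(x, A₋ ∩ A) = δ_{τ(x)}(A₋)·k(τ(x), A) for all A₋ ∈ ℱ₀₋, A ∈ 𝔅(𝒳), x ∈ 𝒳. Then 𝔼(FG) = F·𝔼G for all bounded measurable F, G with F being ℱ₀₋-measurable, and 𝔼F is ℱ₀₋-measurable for every bounded measurable F. -/

import Mathlib

/-!
Taking `A₋ = 𝒳` in the factorization gives `k x = k (τ x)`, and taking `A = 𝒳` shows that `k x`
agrees with `δ_{τ x}` on `ℱ₀₋`. Since `τ` fixes every `ℱ₀₋`-set, an `ℱ₀₋`-measurable `F` is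
`k x`-a.e. equal to the constant `F x`, which gives the module property; and `𝔼 F = (𝔼 F) ∘ τ` is
`ℱ₀₋`-measurable because `τ` is.
-/

open MeasureTheory Set Filter Topology
open scoped ENNReal

/-- The σ-algebra on a set `𝒳` of paths `ℝ → X` generated by the evaluation maps
`π_t : x ↦ x t` for `t ∈ I`. -/
def evalSigma {X : Type*} [m : MeasurableSpace X] (𝒳 : Set (ℝ → X)) (I : Set ℝ) :
    MeasurableSpace 𝒳 :=
  ⨆ t ∈ I, MeasurableSpace.comap (fun x : 𝒳 => x.1 t) m

theorem evalSigma_mono {X : Type*} [MeasurableSpace X] (𝒳 : Set (ℝ → X)) {I J : Set ℝ}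
    (hIJ : I ⊆ J) : evalSigma 𝒳 I ≤ evalSigma 𝒳 J :=
  iSup₂_le fun t ht => le_iSup₂_of_le t (hIJ ht) le_rfl

section Factorization

variable {Ω : Type*} {mm : MeasurableSpace Ω} [MeasurableSpace Ω] {τ : Ω → Ω}
  {k : Ω → Measure Ω}

variable (mm τ k) in
def KernelFactorization : Prop :=
  ∀ Am, MeasurableSet[mm] Am → ∀ A, MeasurableSet A → ∀ x,
    k x (Am ∩ A) = Measure.dirac (τ x) Am * k (τ x) A

theorem kernel_eq_comp_of_factorization (hfact : KernelFactorization mm τ k) (x : Ω) :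
    k x = k (τ x) := by
  ext A hA
  simpa using hfact univ MeasurableSet.univ A hA x

theorem kernel_apply_eq_dirac_of_factorization (hprob : ∀ x, IsProbabilityMeasure (k x))
    (hfact : KernelFactorization mm τ k)
    {Am : Set Ω} (hAm : MeasurableSet[mm] Am) (x : Ω) :
    k x Am = Measure.dirac (τ x) Am := by
  simpa using hfact Am hAm univ MeasurableSet.univ x

theorem ae_eq_apply_of_factorization (hle : mm ≤ ‹MeasurableSpace Ω›)
    (hτinv : ∀ A, MeasurableSet[mm] A → τ ⁻¹' A = A) (hprob : ∀ x, IsProbabilityMeasure (k x))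
    (hfact : KernelFactorization mm τ k)
    {F : Ω → ℝ} (hF : Measurable[mm] F) (x : Ω) :
    ∀ᵐ y ∂k x, F y = F x := by
  have hlevel : MeasurableSet[mm] (F ⁻¹' {F x}) := hF (measurableSet_singleton _)
  have hτx : τ x ∈ F ⁻¹' {F x} := by
    rw [← mem_preimage, hτinv _ hlevel]
    rfl
  change k x (F ⁻¹' {F x})ᶜ = 0
  rw [kernel_apply_eq_dirac_of_factorization hprob hfact hlevel.compl,
    Measure.dirac_apply' _ (hle _ hlevel.compl)]
  simp [hτx]

theorem integral_mul_of_factorization (hle : mm ≤ ‹MeasurableSpace Ω›)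
    (hτinv : ∀ A, MeasurableSet[mm] A → τ ⁻¹' A = A) (hprob : ∀ x, IsProbabilityMeasure (k x))
    (hfact : KernelFactorization mm τ k)
    {F : Ω → ℝ} (hF : Measurable[mm] F) (G : Ω → ℝ) (x : Ω) :
    ∫ y, F y * G y ∂k x = F x * ∫ y, G y ∂k x := by
  rw [← integral_const_mul]
  refine integral_congr_ae ?_
  filter_upwards [ae_eq_apply_of_factorization hle hτinv hprob hfact hF x] with y hy
  rw [hy]

theorem measurable_integral_of_factorization (hτmeas : Measurable[mm, ‹MeasurableSpace Ω›] τ)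
    (hkmeas : ∀ A, MeasurableSet A → Measurable fun x => k x A)
    (hfact : KernelFactorization mm τ k)
    {F : Ω → ℝ} (hF : Measurable F) :
    Measurable[mm] fun x => ∫ y, F y ∂k x := by
  let κ : ProbabilityTheory.Kernel Ω Ω := ⟨k, Measure.measurable_of_measurable_coe _ hkmeas⟩
  have hint : Measurable fun x => ∫ y, F y ∂κ x :=
    hF.stronglyMeasurable.integral_kernel.measurable
  have hcomp : (fun x => ∫ y, F y ∂k x) = (fun x => ∫ y, F y ∂k x) ∘ τ := by
    funext x
    rw [Function.comp_apply, ← kernel_eq_comp_of_factorization hfact x]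
  rw [hcomp]
  exact hint.comp hτmeas

end Factorization

theorem kernel_factorization_implies_module_property_general
    {X : Type*} [MeasurableSpace X]
    (𝒳 : Set (ℝ → X))
    (τ : 𝒳 → 𝒳)
    (hτmeas : @Measurable 𝒳 𝒳 (evalSigma 𝒳 (Set.Iio 0)) (evalSigma 𝒳 Set.univ) τ)
    (hτinv : ∀ A : Set 𝒳, MeasurableSet[evalSigma 𝒳 (Set.Iio 0)] A → τ ⁻¹' A = A)
    (k : 𝒳 → @Measure 𝒳 (evalSigma 𝒳 Set.univ))
    (hprob : ∀ x, IsProbabilityMeasure (k x))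
    (hkmeas : ∀ A : Set 𝒳, MeasurableSet[evalSigma 𝒳 Set.univ] A →
      @Measurable 𝒳 ℝ≥0∞ (evalSigma 𝒳 Set.univ) _ (fun x => k x A))
    (hfact : ∀ Am : Set 𝒳, MeasurableSet[evalSigma 𝒳 (Set.Iio 0)] Am →
      ∀ A : Set 𝒳, MeasurableSet[evalSigma 𝒳 Set.univ] A →
        ∀ x : 𝒳, k x (Am ∩ A) =
          @Measure.dirac 𝒳 (evalSigma 𝒳 Set.univ) (τ x) Am * k (τ x) A) :
    (∀ F G : 𝒳 → ℝ, (∃ C, ∀ x, |F x| ≤ C) →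
      @Measurable 𝒳 ℝ (evalSigma 𝒳 (Set.Iio 0)) _ F →
      (∃ C, ∀ x, |G x| ≤ C) →
      @Measurable 𝒳 ℝ (evalSigma 𝒳 Set.univ) _ G →
      ∀ x, ∫ y, F y * G y ∂(k x) = F x * ∫ y, G y ∂(k x)) ∧
    (∀ F : 𝒳 → ℝ, (∃ C, ∀ x, |F x| ≤ C) →
      @Measurable 𝒳 ℝ (evalSigma 𝒳 Set.univ) _ F →
      @Measurable 𝒳 ℝ (evalSigma 𝒳 (Set.Iio 0)) _ (fun x => ∫ y, F y ∂(k x))) := by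
  let _ : MeasurableSpace 𝒳 := evalSigma 𝒳 Set.univ
  have hle : evalSigma 𝒳 (Set.Iio 0) ≤ evalSigma 𝒳 Set.univ := evalSigma_mono 𝒳 (subset_univ _)
  exact ⟨fun F G _ hF _ _ x => integral_mul_of_factorization hle hτinv hprob hfact hF G x,
    fun F _ hF => measurable_integral_of_factorization hτmeas hkmeas hfact hF⟩

/-- Let `𝔼` be a Markovian kernel operator on `B_b(𝒳)` with kernel `k` such that
`k(x, A₋ ∩ A) = δ_{τ(x)}(A₋) · k(τ(x), A)` for all `A₋ ∈ ℱ₀₋`, `A` Borel and `x`.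
Then `𝔼(FG) = F · 𝔼G` for all bounded measurable `F, G` with `F` being
`ℱ₀₋`-measurable, and `𝔼 F` is `ℱ₀₋`-measurable for every bounded measurable `F`. -/
theorem kernel_factorization_implies_module_property
    {X : Type*} [MetricSpace X] [CompleteSpace X]
    [TopologicalSpace.SeparableSpace X] [MeasurableSpace X] [BorelSpace X]
    (𝒳 : Set (ℝ → X))
    (τ : 𝒳 → 𝒳)
    (hτmeas : @Measurable 𝒳 𝒳 (evalSigma 𝒳 (Set.Iio 0)) (evalSigma 𝒳 Set.univ) τ)
    (hτinv : ∀ A : Set 𝒳, MeasurableSet[evalSigma 𝒳 (Set.Iio 0)] A → τ ⁻¹' A = A)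
    (hτidem : τ ∘ τ = τ)
    (k : 𝒳 → @Measure 𝒳 (evalSigma 𝒳 Set.univ))
    (hprob : ∀ x, IsProbabilityMeasure (k x))
    (hkmeas : ∀ A : Set 𝒳, MeasurableSet[evalSigma 𝒳 Set.univ] A →
      @Measurable 𝒳 ℝ≥0∞ (evalSigma 𝒳 Set.univ) _ (fun x => k x A))
    (hfact : ∀ Am : Set 𝒳, MeasurableSet[evalSigma 𝒳 (Set.Iio 0)] Am →
      ∀ A : Set 𝒳, MeasurableSet[evalSigma 𝒳 Set.univ] A →
        ∀ x : 𝒳, k x (Am ∩ A) =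
          @Measure.dirac 𝒳 (evalSigma 𝒳 Set.univ) (τ x) Am * k (τ x) A) :
    (∀ F G : 𝒳 → ℝ, (∃ C, ∀ x, |F x| ≤ C) →
      @Measurable 𝒳 ℝ (evalSigma 𝒳 (Set.Iio 0)) _ F →
      (∃ C, ∀ x, |G x| ≤ C) →
      @Measurable 𝒳 ℝ (evalSigma 𝒳 Set.univ) _ G →
      ∀ x, ∫ y, F y * G y ∂(k x) = F x * ∫ y, G y ∂(k x)) ∧
    (∀ F : 𝒳 → ℝ, (∃ C, ∀ x, |F x| ≤ C) →
      @Measurable 𝒳 ℝ (evalSigma 𝒳 Set.univ) _ F →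
      @Measurable 𝒳 ℝ (evalSigma 𝒳 (Set.Iio 0)) _ (fun x => ∫ y, F y ∂(k x))) :=
  kernel_factorization_implies_module_property_general 𝒳 τ hτmeas hτinv k hprob hkmeas hfact
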